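/- arXiv:0912.1132 — 3 statements merged into one kernel-verified Lean document; each statement's English description precedes it below -/
import Mathlib

section
/- Let 1 ≤ s < r and let J₁, …, Jₙ ⊆ {1, …, r} be subsets of size s, with Jᵢ = {j_{i,1} < … < j_{i,s}}. Assume the transversality hypothesis: for every choice of partial flags F_{i,1} ⊂ … ⊂ F_{i,s} of complex subspaces of ℂʳ with dim F_{i,l} = j_{i,l} (for i = 1, …, n), there exists an s-dimensional complex subspace E ⊆ ℂʳ with dim(E ∩ F_{i,l}) ≥ l for all i = 1, …, n and l = 1, …, s. Then for any r×r complex Hermitian matrices H₁, …, Hₙ with H₁ + ⋯ + Hₙ = 0, one has Σ_{i=1}^{n} Σ_{j ∈ Jᵢ} λⱼ(Hᵢ) ≤ 0. -/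
/-!
Diagonalize each `H i` with its eigenvalues in nonincreasing order and let `F i l` be the span of
the eigenvectors of the `j i l + 1` largest eigenvalues. Transversality gives an `s`-dimensional
`E` meeting these flags, so for each `i` one can choose an orthonormal basis `v i` of `E` with
`v i l ∈ F i l`; on `F i l` the Rayleigh quotient of `H i` is at least `μ i (j i l)`. Hence
`∑ l, μ i (j i l)` is bounded by the trace of the compression of `H i` to `E`, which does not
depend on the basis, and these traces add up to the trace of the compression of `∑ i, H i = 0`.
-/

open Module Submodule
open scoped InnerProductSpace

section
variable {𝕜 V : Type*} [RCLike 𝕜] [NormedAddCommGroup V] [InnerProductSpace 𝕜 V]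

theorem Orthonormal.snoc {m : ℕ} {v : Fin m → V} (hv : Orthonormal 𝕜 v) {u : V} (hu : ‖u‖ = 1)
    (hvu : ∀ l, ⟪v l, u⟫_𝕜 = 0) : Orthonormal 𝕜 (Fin.snoc v u : Fin (m + 1) → V) := by
  rw [orthonormal_iff_ite] at hv ⊢
  intro a b
  induction a using Fin.lastCases <;> induction b using Fin.lastCases <;>
    simp [hv, hvu, ← inner_conj_symm u, inner_self_eq_norm_sq_to_K, hu, Fin.castSucc_ne_last,
      (Fin.castSucc_ne_last _).symm]

theorem exists_norm_eq_one_mem_inf_orthogonal [FiniteDimensional 𝕜 V] {G K : Submodule 𝕜 V}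
    (h : finrank 𝕜 K < finrank 𝕜 G) : ∃ u ∈ G ⊓ Kᗮ, ‖u‖ = 1 := by
  have hpos : 0 < finrank 𝕜 (G ⊓ Kᗮ : Submodule 𝕜 V) := by
    have := finrank_sup_add_finrank_inf_eq G Kᗮ
    have := (G ⊔ Kᗮ).finrank_le
    have := K.finrank_add_finrank_orthogonal
    omega
  obtain ⟨x, hx, hx0⟩ := exists_mem_ne_zero_of_ne_bot (one_le_finrank_iff.mp hpos)
  exact ⟨(‖x‖⁻¹ : 𝕜) • x, Submodule.smul_mem _ _ hx, norm_smul_inv_norm hx0⟩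

theorem exists_orthonormal_forall_mem [FiniteDimensional 𝕜 V] :
    ∀ {m : ℕ} (G : Fin m → Submodule 𝕜 V), (∀ l : Fin m, (l : ℕ) + 1 ≤ finrank 𝕜 (G l)) →
      ∃ v : Fin m → V, Orthonormal 𝕜 v ∧ ∀ l, v l ∈ G l
  | 0, _, _ => ⟨Fin.elim0, ⟨fun l => l.elim0, fun a => a.elim0⟩, fun l => l.elim0⟩
  | m + 1, G, hG => by
    obtain ⟨v, hv, hvG⟩ :=
      exists_orthonormal_forall_mem (G ∘ Fin.castSucc) fun l => hG l.castSucc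
    have hrank : finrank 𝕜 (span 𝕜 (Set.range v)) < finrank 𝕜 (G (Fin.last m)) := by
      rw [finrank_span_eq_card hv.linearIndependent, Fintype.card_fin]
      exact hG (Fin.last m)
    obtain ⟨u, ⟨huG, huv⟩, hu⟩ := exists_norm_eq_one_mem_inf_orthogonal hrank
    refine ⟨Fin.snoc v u, hv.snoc hu fun l => ?_, Fin.lastCases ?_ fun l => ?_⟩
    · exact (mem_orthogonal _ u).mp huv _ (subset_span ⟨l, rfl⟩)
    · simpa using huG
    · simpa using hvG l

theorem Orthonormal.inner_eq_zero_of_mem_span_image {ι : Type*} {b : ι → V} (hb : Orthonormal 𝕜 b)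
    {s : Set ι} {x : V} (hx : x ∈ span 𝕜 (b '' s)) {k : ι} (hk : k ∉ s) : ⟪b k, x⟫_𝕜 = 0 := by
  refine mem_orthogonal_singleton_iff_inner_right.mp (span_le.mpr ?_ hx)
  rintro _ ⟨l, hl, rfl⟩
  exact mem_orthogonal_singleton_iff_inner_right.mpr (hb.2 (ne_of_mem_of_not_mem hl hk).symm)

variable {ι : Type*} [Fintype ι]

theorem LinearMap.IsSymmetric.re_inner_apply_self_eq_sum {T : V →ₗ[𝕜] V} (hT : T.IsSymmetric)
    (b : OrthonormalBasis ι 𝕜 V) {c : ι → ℝ} (hb : ∀ k, T (b k) = (c k : 𝕜) • b k) (x : V) :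
    RCLike.re ⟪x, T x⟫_𝕜 = ∑ k, c k * ‖⟪b k, x⟫_𝕜‖ ^ 2 := by
  rw [← b.sum_inner_mul_inner, map_sum]
  refine Finset.sum_congr rfl fun k _ => ?_
  rw [← hT, hb, inner_smul_left, ← inner_conj_symm x, RCLike.conj_ofReal, mul_left_comm,
    RCLike.conj_mul]
  norm_cast

theorem LinearMap.IsSymmetric.le_re_inner_apply_self_of_mem_span_Iic [LinearOrder ι]
    {T : V →ₗ[𝕜] V} (hT : T.IsSymmetric) (b : OrthonormalBasis ι 𝕜 V) {c : ι → ℝ}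
    (hc : Antitone c) (hb : ∀ k, T (b k) = (c k : 𝕜) • b k) {t : ι} {x : V}
    (hx : x ∈ span 𝕜 (b '' Set.Iic t)) (hx1 : ‖x‖ = 1) : c t ≤ RCLike.re ⟪x, T x⟫_𝕜 := by
  rw [hT.re_inner_apply_self_eq_sum b hb, ← mul_one (c t), ← one_pow 2, ← hx1,
    ← b.sum_sq_norm_inner_right, Finset.mul_sum]
  refine Finset.sum_le_sum fun k _ => ?_
  rcases le_or_gt k t with hk | hk
  · exact mul_le_mul_of_nonneg_right (hc hk) (by positivity)
  · simp [b.orthonormal.inner_eq_zero_of_mem_span_image hx hk.not_ge]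

noncomputable def Submodule.compression (K : Submodule 𝕜 V) [K.HasOrthogonalProjection] :
    (V →ₗ[𝕜] V) →ₗ[𝕜] K →ₗ[𝕜] K where
  toFun T := K.orthogonalProjectionOnto.toLinearMap ∘ₗ T ∘ₗ K.subtype
  map_add' _ _ := by simp only [LinearMap.add_comp, LinearMap.comp_add]
  map_smul' _ _ := by simp only [LinearMap.smul_comp, LinearMap.comp_smul, RingHom.id_apply]

theorem Submodule.trace_compression_eq_sum_inner [FiniteDimensional 𝕜 V] (K : Submodule 𝕜 V)
    (T : V →ₗ[𝕜] V) {v : ι → V} (hv : Orthonormal 𝕜 v) (hvK : ∀ l, v l ∈ K)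
    (hK : finrank 𝕜 K = Fintype.card ι) :
    LinearMap.trace 𝕜 K (K.compression T) = ∑ l, ⟪v l, T (v l)⟫_𝕜 := by
  let w : ι → K := fun l => ⟨v l, hvK l⟩
  have hw : Orthonormal 𝕜 w :=
    ⟨fun l => by simpa [w] using hv.1 l, fun a b h => by simpa [w] using hv.2 h⟩
  let B := OrthonormalBasis.mk hw
    (hw.linearIndependent.span_eq_top_of_card_eq_finrank' hK.symm).ge
  rw [LinearMap.trace_eq_sum_inner _ B]
  simp [B, w, compression]

theorem LinearMap.IsSymmetric.sum_le_re_trace_compression [FiniteDimensional 𝕜 V]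
    [LinearOrder ι] {κ : Type*} [Fintype κ] {T : V →ₗ[𝕜] V} (hT : T.IsSymmetric)
    (b : OrthonormalBasis ι 𝕜 V) {c : ι → ℝ} (hc : Antitone c) (hb : ∀ k, T (b k) = (c k : 𝕜) • b k) {j : κ → ι}
    {E : Submodule 𝕜 V} (hE : finrank 𝕜 E = Fintype.card κ) {v : κ → V} (hv : Orthonormal 𝕜 v)
    (hvEF : ∀ l, v l ∈ E ⊓ span 𝕜 (b '' Set.Iic (j l))) :
    ∑ l, c (j l) ≤ RCLike.re (LinearMap.trace 𝕜 E (E.compression T)) := by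
  rw [E.trace_compression_eq_sum_inner T hv (fun l => (hvEF l).1) hE, map_sum]
  exact Finset.sum_le_sum fun l _ =>
    hT.le_re_inner_apply_self_of_mem_span_Iic b hc hb (hvEF l).2 (hv.1 l)

end

theorem LinearIndependent.finrank_span_image_Iic {K V : Type*} [DivisionRing K]
    [AddCommGroup V] [Module K V] {r : ℕ} {b : Fin r → V} (hb : LinearIndependent K b) (t : Fin r) :
    finrank K (span K (b '' Set.Iic t)) = t + 1 := by
  rw [Set.image_eq_range]
  exact (finrank_span_eq_card (hb.comp (Subtype.val : Set.Iic t → Fin r)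
    Subtype.val_injective)).trans (by convert (Fintype.card_Iic t).trans (Fin.card_Iic t))

theorem Matrix.IsHermitian.toEuclideanLin_eigenvectorBasis {𝕜 n : Type*} [RCLike 𝕜] [Fintype n]
    [DecidableEq n] {A : Matrix n n 𝕜} (hA : A.IsHermitian) (k : n) :
    A.toEuclideanLin (hA.eigenvectorBasis k) = (hA.eigenvalues k : 𝕜) • hA.eigenvectorBasis k := by
  simp [Matrix.toLpLin_apply, hA.mulVec_eigenvectorBasis]

theorem Matrix.IsHermitian.exists_orthonormalBasis_toEuclideanLin_apply {𝕜 n : Type*} [RCLike 𝕜]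
    [Fintype n] [DecidableEq n] {A : Matrix n n 𝕜} (hA : A.IsHermitian) {c : n → ℝ}
    (hc : ∃ σ : Equiv.Perm n, ∀ k, c k = hA.eigenvalues (σ k)) :
    ∃ b : OrthonormalBasis n 𝕜 (EuclideanSpace 𝕜 n),
      ∀ k, A.toEuclideanLin (b k) = (c k : 𝕜) • b k := by
  obtain ⟨σ, hσ⟩ := hc
  exact ⟨hA.eigenvectorBasis.reindex σ.symm, fun k => by
    simp [hσ, hA.toEuclideanLin_eigenvectorBasis]⟩

theorem horn_inequalities_necessary_general (r s n : ℕ)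
    (j : Fin n → Fin s → Fin r) (hj : ∀ i, StrictMono (j i))
    (htrans : ∀ F : Fin n → Fin s → Submodule ℂ (EuclideanSpace ℂ (Fin r)),
      (∀ i, Monotone (F i)) →
      (∀ i l, Module.finrank ℂ (F i l) = (j i l : ℕ) + 1) →
      ∃ E : Submodule ℂ (EuclideanSpace ℂ (Fin r)),
        Module.finrank ℂ E = s ∧
        ∀ i, ∀ l : Fin s, (l : ℕ) + 1 ≤ Module.finrank ℂ (E ⊓ F i l : Submodule ℂ _))
    (H : Fin n → Matrix (Fin r) (Fin r) ℂ) (hH : ∀ i, (H i).IsHermitian)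
    (hsum : ∑ i, H i = 0)
    (μ : Fin n → Fin r → ℝ) (hmono : ∀ i, Antitone (μ i))
    (hperm : ∀ i, ∃ σ : Equiv.Perm (Fin r), ∀ k, μ i k = (hH i).eigenvalues (σ k)) :
    ∑ i, ∑ l, μ i (j i l) ≤ 0 := by
  choose b hb using fun i => (hH i).exists_orthonormalBasis_toEuclideanLin_apply (hperm i)
  let F i l := span ℂ (b i '' Set.Iic (j i l))
  obtain ⟨E, hE, hEF⟩ := htrans F
    (fun i _ _ hll' => span_mono (Set.image_mono (Set.Iic_subset_Iic.mpr ((hj i).monotone hll'))))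
    (fun i l => (b i).orthonormal.linearIndependent.finrank_span_image_Iic (j i l))
  choose v hv hvEF using fun i => exists_orthonormal_forall_mem (fun l => E ⊓ F i l) (hEF i)
  calc ∑ i, ∑ l, μ i (j i l)
      ≤ ∑ i, RCLike.re (LinearMap.trace ℂ E (E.compression (H i).toEuclideanLin)) :=
        Finset.sum_le_sum fun i _ =>
          (Matrix.isSymmetric_toEuclideanLin_iff.mpr (hH i)).sum_le_re_trace_compression (b i)
            (hmono i) (hb i) (hE.trans (Fintype.card_fin s).symm) (hv i) (hvEF i)
    _ = 0 := by simp only [← map_sum, hsum, map_zero]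

/-- **Necessary Horn inequalities.** Let `1 ≤ s < r` and let `J₁, …, Jₙ` be
`s`-element subsets of `{1, …, r}`, given by strictly increasing maps
`j i : Fin s → Fin r`.  Assume transversality: for every choice of partial flags
`F i` of types `J i` there is an `s`-dimensional subspace `E` with
`dim (E ⊓ F i l) ≥ l + 1` for all `i, l`.  Then for Hermitian matrices
`H 1, …, H n` summing to zero, with `μ i` the eigenvalues of `H i` in
nonincreasing order, `Σᵢ Σ_{l} μ i (j i l) ≤ 0`. -/
theorem horn_inequalities_necessary (r s n : ℕ) (hs : 1 ≤ s) (hsr : s < r) (hn : 1 ≤ n)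
    (j : Fin n → Fin s → Fin r) (hj : ∀ i, StrictMono (j i))
    (htrans : ∀ F : Fin n → Fin s → Submodule ℂ (EuclideanSpace ℂ (Fin r)),
      (∀ i, Monotone (F i)) →
      (∀ i l, Module.finrank ℂ (F i l) = (j i l : ℕ) + 1) →
      ∃ E : Submodule ℂ (EuclideanSpace ℂ (Fin r)),
        Module.finrank ℂ E = s ∧
        ∀ i, ∀ l : Fin s, (l : ℕ) + 1 ≤ Module.finrank ℂ (E ⊓ F i l : Submodule ℂ _))
    (H : Fin n → Matrix (Fin r) (Fin r) ℂ) (hH : ∀ i, (H i).IsHermitian)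
    (hsum : ∑ i, H i = 0)
    (μ : Fin n → Fin r → ℝ) (hmono : ∀ i, Antitone (μ i))
    (hperm : ∀ i, ∃ σ : Equiv.Perm (Fin r), ∀ k, μ i k = (hH i).eigenvalues (σ k)) :
    ∑ i, ∑ l, μ i (j i l) ≤ 0 :=
  horn_inequalities_necessary_general r s n j hj htrans H hH hsum μ hmono hperm
end

section
/- Let V be a finite-dimensional complex inner product space, T : V → V a self-adjoint linear operator, and v ∈ V a nonzero vector. Then for every t ∈ ℝ the function ψ(t) = log ‖exp(tT) v‖ is differentiable at t with derivative ψ′(t) = ⟨w, Tw⟩ / ⟨w, w⟩, where w = exp(tT) v. -/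
/-!
With `w(t) = exp(tT) v` one has `w' = T w`, and `w(t) ≠ 0` because `exp(tT)` is invertible.
Since `log ‖w‖ = ½ log ‖w‖²` and `(‖w‖²)' = 2 Re ⟪w, w'⟫`, the derivative is `Re ⟪w, T w⟫ / ‖w‖²`.
-/

open NormedSpace

open scoped RealInnerProductSpace in
theorem HasDerivAt.log_norm {F : Type*} [NormedAddCommGroup F] [InnerProductSpace ℝ F]
    {f : ℝ → F} {f' : F} {t : ℝ} (hf : HasDerivAt f f' t) (h0 : f t ≠ 0) :
    HasDerivAt (fun u => Real.log ‖f u‖) (⟪f t, f'⟫ / ‖f t‖ ^ 2) t := by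
  have hsq := (hf.norm_sq.log (by positivity)).div_const 2
  simpa [Real.log_pow, mul_div_assoc] using hsq

theorem exp_apply_ne_zero {𝕜 V : Type*} [RCLike 𝕜] [NormedAddCommGroup V] [NormedSpace 𝕜 V]
    [CompleteSpace V] (A : V →L[𝕜] V) {v : V} (hv : v ≠ 0) : exp A v ≠ 0 := by
  let : NormedAlgebra ℚ (V →L[𝕜] V) := NormedAlgebra.restrictScalars ℚ 𝕜 _
  have hinj := (ContinuousLinearMap.isUnit_iff_bijective.mp (isUnit_exp A)).injective
  exact (map_ne_zero_iff _ hinj).mpr hv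

theorem hasDerivAt_exp_ofReal_smul_apply {V : Type*} [NormedAddCommGroup V] [NormedSpace ℂ V]
    [CompleteSpace V] (T : V →L[ℂ] V) (v : V) (t : ℝ) :
    HasDerivAt (fun u : ℝ => exp ((u : ℂ) • T) v) (T (exp ((t : ℂ) • T) v)) t := by
  have h := hasDerivAt_exp_smul_const' (𝕂 := ℝ) T t
  simp only [← Complex.coe_smul] at h
  exact ((ContinuousLinearMap.apply ℂ V v).restrictScalars ℝ).hasFDerivAt.comp_hasDerivAt t h

theorem kempfNess_deriv_general (V : Type*) [NormedAddCommGroup V] [InnerProductSpace ℂ V]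
    [FiniteDimensional ℂ V] (T : V →L[ℂ] V)
    (v : V) (hv : v ≠ 0) (t : ℝ) :
    HasDerivAt (fun t : ℝ => Real.log ‖NormedSpace.exp ((t : ℂ) • T) v‖)
      ((inner ℂ (NormedSpace.exp ((t : ℂ) • T) v)
          (T (NormedSpace.exp ((t : ℂ) • T) v)) : ℂ).re /
        (inner ℂ (NormedSpace.exp ((t : ℂ) • T) v)
          (NormedSpace.exp ((t : ℂ) • T) v) : ℂ).re) t := by
  let : InnerProductSpace ℝ V := InnerProductSpace.rclikeToReal ℂ V
  have hw := exp_apply_ne_zero ((t : ℂ) • T) hv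
  have h := (hasDerivAt_exp_ofReal_smul_apply T v t).log_norm hw
  rwa [← inner_self_eq_norm_sq (𝕜 := ℂ), real_inner_eq_re_inner ℂ] at h

/-- **Derivative of the Kempf–Ness function.** For a self-adjoint operator `T`
on a finite-dimensional complex inner product space and nonzero `v`, the
function `ψ(t) = log ‖exp(tT) v‖` is differentiable at every `t`, with
derivative `⟨w, Tw⟩ / ⟨w, w⟩` where `w = exp(tT) v`. -/
theorem kempfNess_deriv (V : Type*) [NormedAddCommGroup V] [InnerProductSpace ℂ V]
    [FiniteDimensional ℂ V] (T : V →L[ℂ] V) (hT : IsSelfAdjoint T)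
    (v : V) (hv : v ≠ 0) (t : ℝ) :
    HasDerivAt (fun t : ℝ => Real.log ‖NormedSpace.exp ((t : ℂ) • T) v‖)
      ((inner ℂ (NormedSpace.exp ((t : ℂ) • T) v)
          (T (NormedSpace.exp ((t : ℂ) • T) v)) : ℂ).re /
        (inner ℂ (NormedSpace.exp ((t : ℂ) • T) v)
          (NormedSpace.exp ((t : ℂ) • T) v) : ℂ).re) t :=
  kempfNess_deriv_general V T v hv t
end

section
/- Let V be a finite-dimensional complex inner product space and T : V → V a self-adjoint linear operator. Let v = w + u be a nonzero vector, where w ≠ 0 satisfies Tw = μw for a real number μ, and u lies in the sum of the eigenspaces of T with eigenvalues strictly greater than μ. Then there exist constants C > 0 and c > 0 such that for all t ≥ 0, ‖ exp(−tT)v / ‖exp(−tT)v‖ − w/‖w‖ ‖ ≤ C e^{−ct}; in particular, the normalized flow exp(−tT)v/‖exp(−tT)v‖ converges exponentially fast to the unit eigenvector w/‖w‖ as t → ∞. -/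
/-!
Rescale the flow by `e^{μt}`: this fixes `w`, does not change the direction of the flow, and
multiplies the component of `u` in the `ν`-eigenspace by `e^{-(ν - μ)t}`. Hence the rescaled flow
is `w + r t` with `r` exponentially decaying, and `‖x/‖x‖ - w/‖w‖‖ ≤ 2‖x - w‖/‖w‖`.
-/

open Asymptotics Filter Set NormedSpace

theorem NormedSpace.norm_normalize_sub_normalize_le {V : Type*} [NormedAddCommGroup V]
    [NormedSpace ℝ V] (x : V) {y : V} (hy : y ≠ 0) :
    ‖normalize x - normalize y‖ ≤ 2 * ‖x - y‖ / ‖y‖ := by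
  have hy' : 0 < ‖y‖ := norm_pos_iff.mpr hy
  have hsplit : normalize x - normalize y = ‖y‖⁻¹ • (x - y) + (‖x‖⁻¹ - ‖y‖⁻¹) • x := by
    simp only [normalize, smul_sub, sub_smul]; abel
  have hscale : ‖(‖x‖⁻¹ - ‖y‖⁻¹) • x‖ ≤ ‖x - y‖ / ‖y‖ := by
    rcases eq_or_ne x 0 with rfl | hx
    · simp only [smul_zero, norm_zero]; positivity
    have hx' : 0 < ‖x‖ := norm_pos_iff.mpr hx
    calc ‖(‖x‖⁻¹ - ‖y‖⁻¹) • x‖ = |(‖x‖⁻¹ - ‖y‖⁻¹) * ‖x‖| := by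
          rw [norm_smul, Real.norm_eq_abs, abs_mul, abs_norm]
      _ = |‖y‖ - ‖x‖| / ‖y‖ := by
          rw [show (‖x‖⁻¹ - ‖y‖⁻¹) * ‖x‖ = (‖y‖ - ‖x‖) / ‖y‖ by field_simp, abs_div,
            abs_of_pos hy']
      _ ≤ ‖x - y‖ / ‖y‖ := by gcongr; rw [abs_sub_comm]; exact abs_norm_sub_norm_le x y
  calc ‖normalize x - normalize y‖
      ≤ ‖‖y‖⁻¹ • (x - y)‖ + ‖(‖x‖⁻¹ - ‖y‖⁻¹) • x‖ := hsplit ▸ norm_add_le _ _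
    _ ≤ ‖x - y‖ / ‖y‖ + ‖x - y‖ / ‖y‖ := by
        gcongr
        rw [norm_smul, norm_inv, norm_norm, inv_mul_eq_div]
    _ = 2 * ‖x - y‖ / ‖y‖ := by ring

theorem ContinuousLinearMap.exp_apply_of_apply_eq_smul {𝕂 V : Type*} [RCLike 𝕂]
    [NormedAddCommGroup V] [NormedSpace 𝕂 V] [CompleteSpace V] (A : V →L[𝕂] V) {a : 𝕂} {x : V}
    (hx : A x = a • x) : exp A x = exp a • x := by
  have hpow (n : ℕ) : (A ^ n) x = a ^ n • x := by
    induction n with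
    | zero => simp
    | succ n ih => rw [pow_succ, mul_apply_eq_comp, hx, map_smul, ih, smul_smul, pow_succ']
  have hA := (exp_series_hasSum_exp' (𝕂 := 𝕂) A).mapL (apply 𝕂 V x)
  simp only [apply_apply, smul_apply, hpow, smul_smul] at hA
  exact hA.unique ((exp_series_hasSum_exp' (𝕂 := 𝕂) a).smul_const x)

theorem isBigO_exp_neg_mul_of_le {c c' : ℝ} (h : c' ≤ c) :
    (fun t : ℝ => Real.exp (-(c * t))) =O[𝓟 (Ici 0)] fun t => Real.exp (-(c' * t)) := by
  refine IsBigO.of_bound 1 (eventually_principal.2 fun t (ht : 0 ≤ t) => ?_)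
  simp only [Real.norm_eq_abs, Real.abs_exp, one_mul, Real.exp_le_exp, neg_le_neg_iff]
  exact mul_le_mul_of_nonneg_right h ht

variable (𝕜 E : Type*) [NormedField 𝕜] [NormedAddCommGroup E] [NormedSpace 𝕜 E] in
noncomputable def exponentiallyDecaying : Submodule 𝕜 (ℝ → E) where
  carrier := {f | ∃ c > 0, f =O[𝓟 (Ici 0)] fun t => Real.exp (-(c * t))}
  zero_mem' := ⟨1, one_pos, isBigO_zero _ _⟩
  add_mem' := by
    rintro f g ⟨c, hc, hf⟩ ⟨c', hc', hg⟩
    exact ⟨min c c', lt_min hc hc', (hf.trans (isBigO_exp_neg_mul_of_le (min_le_left c c'))).add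
      (hg.trans (isBigO_exp_neg_mul_of_le (min_le_right c c')))⟩
  smul_mem' := by
    rintro a f ⟨c, hc, hf⟩
    exact ⟨c, hc, hf.const_smul_left a⟩

section RescaledFlow

variable {V : Type*} [NormedAddCommGroup V] [NormedSpace ℂ V] (T : V →L[ℂ] V) (μ : ℝ)

noncomputable def rescaledFlow : V →ₗ[ℂ] ℝ → V where
  toFun x t := Real.exp (μ * t) • exp ((-(t : ℂ)) • T) x
  map_add' x y := by ext t; simp only [map_add, smul_add, Pi.add_apply]
  map_smul' a x := by
    ext t; simp only [map_smul, Pi.smul_apply, RingHom.id_apply, smul_comm (Real.exp (μ * t)) a]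

theorem rescaledFlow_apply (x : V) (t : ℝ) :
    rescaledFlow T μ x t = Real.exp (μ * t) • exp ((-(t : ℂ)) • T) x :=
  rfl

variable [CompleteSpace V]

theorem rescaledFlow_of_apply_eq_smul {ν : ℝ} {x : V} (hx : T x = (ν : ℂ) • x) (t : ℝ) :
    rescaledFlow T μ x t = Real.exp (-((ν - μ) * t)) • x := by
  have hx' : ((-(t : ℂ)) • T) x = (-(t : ℂ) * ν) • x := by
    rw [smul_apply, hx, smul_smul]
  rw [rescaledFlow_apply, ContinuousLinearMap.exp_apply_of_apply_eq_smul _ hx',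
    ← Complex.exp_eq_exp_ℂ, show -(t : ℂ) * ν = ((-(t * ν) : ℝ) : ℂ) by push_cast; ring,
    ← Complex.ofReal_exp, Complex.coe_smul, smul_smul, ← Real.exp_add]
  ring_nf

theorem eigenspace_le_comap_rescaledFlow {ν : ℝ} (hν : μ < ν) :
    Module.End.eigenspace (T : V →ₗ[ℂ] V) (ν : ℂ) ≤
      (exponentiallyDecaying ℂ V).comap (rescaledFlow T μ) := by
  intro x hx
  refine ⟨ν - μ, sub_pos.2 hν, IsBigO.of_bound ‖x‖ (Eventually.of_forall fun t => ?_)⟩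
  rw [rescaledFlow_of_apply_eq_smul T μ (Module.End.mem_eigenspace_iff.1 hx), norm_smul,
    mul_comm]

theorem iSup_eigenspace_gt_le_comap_rescaledFlow :
    ⨆ (ν : ℝ) (_ : μ < ν), Module.End.eigenspace (T : V →ₗ[ℂ] V) (ν : ℂ) ≤
      (exponentiallyDecaying ℂ V).comap (rescaledFlow T μ) :=
  iSup₂_le fun _ hν => eigenspace_le_comap_rescaledFlow T μ hν

end RescaledFlow

theorem normalized_flow_exponential_convergence_general (V : Type*) [NormedAddCommGroup V]
    [InnerProductSpace ℂ V] [FiniteDimensional ℂ V]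
    (T : V →L[ℂ] V) (w u : V) (hw : w ≠ 0) (μ : ℝ)
    (hwe : T w = (μ : ℂ) • w)
    (hu : u ∈ ⨆ (ν : ℝ) (_ : μ < ν), Module.End.eigenspace (T : V →ₗ[ℂ] V) (ν : ℂ)) :
    ∃ C > (0 : ℝ), ∃ c > (0 : ℝ), ∀ t : ℝ, 0 ≤ t →
      ‖(‖NormedSpace.exp ((-(t : ℂ)) • T) (w + u)‖⁻¹ •
          NormedSpace.exp ((-(t : ℂ)) • T) (w + u)) - ‖w‖⁻¹ • w‖ ≤
        C * Real.exp (-(c * t)) := by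
  obtain ⟨c, hc, hdecay⟩ := iSup_eigenspace_gt_le_comap_rescaledFlow T μ hu
  have hw_fixed (t : ℝ) : rescaledFlow T μ w t = w := by
    simpa using rescaledFlow_of_apply_eq_smul T μ hwe t
  have hflow (t : ℝ) : normalize (exp ((-(t : ℂ)) • T) (w + u)) =
      normalize (w + rescaledFlow T μ u t) := by
    rw [← normalize_smul_of_pos (Real.exp_pos (μ * t)), ← rescaledFlow_apply, map_add,
      Pi.add_apply, hw_fixed]
  have hO : (fun t : ℝ => normalize (exp ((-(t : ℂ)) • T) (w + u)) - normalize w)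
      =O[𝓟 (Ici 0)] fun t => Real.exp (-(c * t)) := by
    refine (IsBigO.of_bound (2 / ‖w‖) (Eventually.of_forall fun t => ?_)).trans hdecay
    rw [hflow]
    calc _ ≤ 2 * ‖w + rescaledFlow T μ u t - w‖ / ‖w‖ := norm_normalize_sub_normalize_le _ hw
      _ = 2 / ‖w‖ * ‖rescaledFlow T μ u t‖ := by rw [add_sub_cancel_left]; ring
  obtain ⟨C, hC, hCO⟩ := hO.exists_pos
  refine ⟨C, hC, c, hc, fun t ht => ?_⟩
  exact (isBigOWith_principal.1 hCO t ht).trans_eq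
    (by rw [Real.norm_of_nonneg (Real.exp_pos _).le])

/-- **Exponential convergence to the associated graded point.** Let `T` be a
self-adjoint operator on a finite-dimensional complex inner product space, and
let `v = w + u` be nonzero with `w ≠ 0` an eigenvector of `T` with (real)
eigenvalue `μ`, and `u` in the sum of the eigenspaces of `T` with eigenvalues
strictly greater than `μ`.  Then the normalized flow
`exp(−tT) v / ‖exp(−tT) v‖` converges exponentially fast to `w / ‖w‖`. -/
theorem normalized_flow_exponential_convergence (V : Type*) [NormedAddCommGroup V]
    [InnerProductSpace ℂ V] [FiniteDimensional ℂ V]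
    (T : V →L[ℂ] V) (hT : IsSelfAdjoint T) (w u : V) (hw : w ≠ 0) (μ : ℝ)
    (hwe : T w = (μ : ℂ) • w)
    (hu : u ∈ ⨆ (ν : ℝ) (_ : μ < ν), Module.End.eigenspace (T : V →ₗ[ℂ] V) (ν : ℂ))
    (hv : w + u ≠ 0) :
    ∃ C > (0 : ℝ), ∃ c > (0 : ℝ), ∀ t : ℝ, 0 ≤ t →
      ‖(‖NormedSpace.exp ((-(t : ℂ)) • T) (w + u)‖⁻¹ •
          NormedSpace.exp ((-(t : ℂ)) • T) (w + u)) - ‖w‖⁻¹ • w‖ ≤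
        C * Real.exp (-(c * t)) :=
  normalized_flow_exponential_convergence_general V T w u hw μ hwe hu
end
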